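/- Let (G, π₁) and (G, π₂) be permutation groups on the same finite group G, with induced matrix representations Π₁, Π₂ and permutation polytopes P(Π₁), P(Π₂). If (G, π₁) and (G, π₂) are effectively equivalent, then there is an affine isomorphism Φ : aff(P(Π₁)) → aff(P(Π₂)) which maps P(Π₁) onto P(Π₂) and whose restriction to the set Π₁(G) of permutation matrices is a group homomorphism onto Π₂(G) (i.e. Φ(M_{π₁(g)} M_{π₁(h)}) = Φ(M_{π₁(g)}) Φ(M_{π₁(h)}) for all g, h ∈ G). -/

import Mathlib

open Finset

/-- The permutation matrix of `σ`: `(M_σ)_{ij} = 1` if `i = σ j` and `0` otherwise. -/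
def permMat (n : ℕ) (σ : Equiv.Perm (Fin n)) : Matrix (Fin n) (Fin n) ℝ :=
  Matrix.of fun i j => if i = σ j then 1 else 0

lemma permMat_one (n : ℕ) : permMat n 1 = 1 := by
  ext i j; simp [permMat, Matrix.one_apply]; congr

lemma permMat_mul (n : ℕ) (σ τ : Equiv.Perm (Fin n)) :
    permMat n (σ * τ) = permMat n σ * permMat n τ := by
  ext i j
  simp only [permMat, Matrix.mul_apply, Matrix.of_apply, Equiv.Perm.mul_apply]
  rw [Finset.sum_eq_single (τ j)]
  · simp; congr
  · intro k _ hk; simp [hk]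
  · simp

/-- The matrix representation `Π : G → GL_n(ℝ)`, `g ↦ M_{π(g)}`, acting on `ℝⁿ`. -/
noncomputable def permRep (n : ℕ) {G : Type} [Group G] (π : G →* Equiv.Perm (Fin n)) :
    Representation ℝ G (Fin n → ℝ) where
  toFun g := (permMat n (π g)).mulVecLin
  map_one' := by simp [permMat_one]; rfl
  map_mul' g h := by simp [permMat_mul]; rfl

variable {G : Type} [Group G] [Fintype G]

/-- The affine kernel `ker°ρ` of a real representation `ρ` of `G`. -/
def affKer {V : Type} [AddCommGroup V] [Module ℝ V]
    (ρ : Representation ℝ G V) : Set (G → ℝ) :=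
  {l | (∑ g : G, l g • (ρ g : V →ₗ[ℝ] V)) = 0 ∧ (∑ g : G, l g) = 0}

/-- Direct sum (realized on the product space) of two representations. -/
def prodRep {V W : Type} [AddCommGroup V] [Module ℝ V] [AddCommGroup W] [Module ℝ W]
    (ρ : Representation ℝ G V) (σ : Representation ℝ G W) :
    Representation ℝ G (V × W) where
  toFun g := (ρ g).prodMap (σ g)
  map_one' := by ext <;> simp
  map_mul' g h := by ext <;> simp

/-- Isomorphism of `G`-representations. -/
def RepIso {V W : Type} [AddCommGroup V] [Module ℝ V] [AddCommGroup W] [Module ℝ W]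
    (ρ : Representation ℝ G V) (σ : Representation ℝ G W) : Prop :=
  ∃ e : V ≃ₗ[ℝ] W, ∀ (g : G) (v : V), e (ρ g v) = σ g (e v)

/-- Stable equivalence of real representations. -/
def StablyEquivalent {V W : Type} [AddCommGroup V] [Module ℝ V] [AddCommGroup W] [Module ℝ W]
    (ρ₁ : Representation ℝ G V) (ρ₂ : Representation ℝ G W) : Prop :=
  ∃ (V' : Type) (_ : AddCommGroup V') (_ : Module ℝ V') (ρ₁' : Representation ℝ G V')
    (W' : Type) (_ : AddCommGroup W') (_ : Module ℝ W') (ρ₂' : Representation ℝ G W'),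
    affKer ρ₁ ⊆ affKer ρ₁' ∧ affKer ρ₂ ⊆ affKer ρ₂' ∧
    RepIso (prodRep ρ₁ ρ₁') (prodRep ρ₂ ρ₂')

/-!
Stable equivalence of `Π₁` and `Π₂ ∘ φ` forces their affine kernels to coincide, and the affine
kernel of a permutation representation is the space of affine relations among the permutation
matrices. So the vertex families `g ↦ M_{π₁ g}` and `g ↦ M_{π₂ (φ g)}` satisfy the same affine
relations, which is exactly what is needed for `M_{π₁ g} ↦ M_{π₂ (φ g)}` to extend to affine maps
in both directions, mutually inverse on the affine spans. Multiplicativity on vertices is then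
inherited from `π₁`, `π₂` and `φ`.
-/

open Set

section AffineRelations

variable {K ι M M₁ M₂ : Type} [Field K] [Fintype ι]
  [AddCommGroup M] [Module K M] [AddCommGroup M₁] [Module K M₁] [AddCommGroup M₂] [Module K M₂]

theorem LinearMap.exists_comp_eq_of_ker_le (f : M →ₗ[K] M₁) (g : M →ₗ[K] M₂)
    (h : LinearMap.ker f ≤ LinearMap.ker g) : ∃ g' : M₁ →ₗ[K] M₂, g' ∘ₗ f = g := by
  obtain ⟨g', hg'⟩ :=
    LinearMap.exists_extend ((LinearMap.ker f).liftQ g h ∘ₗ f.quotKerEquivRange.symm.toLinearMap)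
  refine ⟨g', LinearMap.ext fun x => ?_⟩
  simpa [f.quotKerEquivRange_symm_apply_image] using
    LinearMap.congr_fun hg' ⟨f x, LinearMap.mem_range_self f x⟩

variable (K) in
def affineRelations (v : ι → M) : Submodule K (ι → K) :=
  LinearMap.ker (Fintype.linearCombination K fun i => (v i, (1 : K)))

theorem mem_affineRelations {v : ι → M} {l : ι → K} :
    l ∈ affineRelations K v ↔ ∑ i, l i • v i = 0 ∧ ∑ i, l i = 0 := by
  simp [affineRelations, Fintype.linearCombination_apply, Prod.ext_iff, Prod.fst_sum, Prod.snd_sum]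

theorem affineRelations_prodMk (v : ι → M₁) (w : ι → M₂) :
    affineRelations K (fun i => (v i, w i)) = affineRelations K v ⊓ affineRelations K w := by
  ext l
  simp only [mem_affineRelations, Prod.smul_mk, Prod.ext_iff, Prod.fst_sum, Prod.fst_zero,
    Prod.snd_sum, Prod.snd_zero, Submodule.mem_inf]
  tauto

theorem affineRelations_comp_of_injective {L : M₁ →ₗ[K] M₂} (hL : Function.Injective L)
    (v : ι → M₁) : affineRelations K (L ∘ v) = affineRelations K v := by
  ext l
  simp only [mem_affineRelations, Function.comp_apply, ← map_smul, ← map_sum,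
    map_eq_zero_iff L hL]

theorem exists_affineMap_apply_eq_of_affineRelations_le {v : ι → M₁} {w : ι → M₂}
    (h : affineRelations K v ≤ affineRelations K w) : ∃ f : M₁ →ᵃ[K] M₂, ∀ i, f (v i) = w i := by
  classical
  obtain ⟨S, hS⟩ := LinearMap.exists_comp_eq_of_ker_le
    (Fintype.linearCombination K fun i => (v i, (1 : K)))
    (Fintype.linearCombination K fun i => (w i, (1 : K))) h
  -- `S` is linear on `M₁ × K`; its restriction to the hyperplane `M₁ × {1}` is the affine map.
  refine ⟨(LinearMap.fst K M₂ K ∘ₗ S ∘ₗ LinearMap.inl K M₁ K).toAffineMap +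
    AffineMap.const K M₁ (S (0, 1)).1, fun i => ?_⟩
  have := LinearMap.congr_fun hS (Pi.single i 1)
  simp only [LinearMap.comp_apply, Fintype.linearCombination_apply_single, one_smul] at this
  simp [← Prod.fst_add, ← map_add, this]

end AffineRelations

section AffineKernel

variable {V W : Type} [AddCommGroup V] [Module ℝ V] [AddCommGroup W] [Module ℝ W]

theorem affKer_eq_affineRelations (ρ : Representation ℝ G V) :
    affKer ρ = affineRelations ℝ fun g => (ρ g : Module.End ℝ V) := by
  ext l
  rw [SetLike.mem_coe, mem_affineRelations]
  rfl

theorem affKer_prodRep (ρ : Representation ℝ G V) (σ : Representation ℝ G W) :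
    affKer (prodRep ρ σ) = affKer ρ ∩ affKer σ := by
  have hinj : Function.Injective
      (LinearMap.prodMapLinear ℝ V W V W ℝ : Module.End ℝ V × Module.End ℝ W →ₗ[ℝ] _) := by
    rintro ⟨a, b⟩ ⟨c, d⟩ h
    simp only [LinearMap.prodMapLinear_apply] at h
    exact Prod.ext (LinearMap.ext fun x => congr_arg Prod.fst (LinearMap.congr_fun h (x, 0)))
      (LinearMap.ext fun y => congr_arg Prod.snd (LinearMap.congr_fun h (0, y)))
  simp only [affKer_eq_affineRelations, ← affineRelations_prodMk, ← Submodule.coe_inf]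
  rw [← affineRelations_comp_of_injective hinj]
  rfl

theorem RepIso.affKer_eq {ρ : Representation ℝ G V} {σ : Representation ℝ G W}
    (h : RepIso ρ σ) : affKer ρ = affKer σ := by
  obtain ⟨e, he⟩ := h
  have hσ : (fun g => (σ g : Module.End ℝ W)) = e.conj.toLinearMap ∘ fun g => ρ g :=
    funext fun g => LinearMap.ext fun w => by simp [LinearEquiv.conj_apply, he]
  rw [affKer_eq_affineRelations, affKer_eq_affineRelations, hσ,
    affineRelations_comp_of_injective (L := e.conj.toLinearMap) e.conj.injective]

theorem StablyEquivalent.affKer_eq {ρ : Representation ℝ G V} {σ : Representation ℝ G W}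
    (h : StablyEquivalent ρ σ) : affKer ρ = affKer σ := by
  obtain ⟨_, _, _, ρ', _, _, _, σ', hρ', hσ', hiso⟩ := h
  have := hiso.affKer_eq
  rwa [affKer_prodRep, affKer_prodRep, inter_eq_left.2 hρ', inter_eq_left.2 hσ'] at this

theorem affKer_permRep {n : ℕ} (π : G →* Equiv.Perm (Fin n)) :
    affKer (permRep n π) = affineRelations ℝ fun g => permMat n (π g) := by
  rw [affKer_eq_affineRelations, ← affineRelations_comp_of_injective
    (L := (Matrix.toLin' : Matrix (Fin n) (Fin n) ℝ ≃ₗ[ℝ] _).toLinearMap) Matrix.toLin'.injective]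
  rfl

end AffineKernel

theorem leftInvOn_affineSpan_convexHull_range {𝕜 ι E F : Type} [Field 𝕜] [LinearOrder 𝕜]
    [IsStrictOrderedRing 𝕜] [AddCommGroup E] [Module 𝕜 E] [AddCommGroup F] [Module 𝕜 F]
    {f : E →ᵃ[𝕜] F} {f' : F →ᵃ[𝕜] E} {v : ι → E} (h : ∀ i, f' (f (v i)) = v i) :
    ∀ x ∈ affineSpan 𝕜 (convexHull 𝕜 (range v)), f' (f x) = x := by
  rw [affineSpan_convexHull]
  exact fun x hx => AffineMap.eqOn_affineSpan (f := f'.comp f) (g := AffineMap.id 𝕜 E)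
    (by rintro _ ⟨i, rfl⟩; exact h i) hx

theorem effectivelyEquivalent_implies_affine_iso_multiplicative_on_vertices_general
    {n₁ n₂ : ℕ} (π₁ : G →* Equiv.Perm (Fin n₁)) (π₂ : G →* Equiv.Perm (Fin n₂))
    (heff : ∃ φ : G ≃* G,
      StablyEquivalent (permRep n₁ π₁) ((permRep n₂ π₂).comp φ.toMonoidHom)) :
    ∃ (f : Matrix (Fin n₁) (Fin n₁) ℝ →ᵃ[ℝ] Matrix (Fin n₂) (Fin n₂) ℝ)
      (f' : Matrix (Fin n₂) (Fin n₂) ℝ →ᵃ[ℝ] Matrix (Fin n₁) (Fin n₁) ℝ),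
      f '' (convexHull ℝ (Set.range fun g : G => permMat n₁ (π₁ g)))
        = convexHull ℝ (Set.range fun g : G => permMat n₂ (π₂ g)) ∧
      (∀ x ∈ affineSpan ℝ (convexHull ℝ (Set.range fun g : G => permMat n₁ (π₁ g))),
        f' (f x) = x) ∧
      (∀ y ∈ affineSpan ℝ (convexHull ℝ (Set.range fun g : G => permMat n₂ (π₂ g))),
        f (f' y) = y) ∧
      (f '' (Set.range fun g : G => permMat n₁ (π₁ g))
        = Set.range fun g : G => permMat n₂ (π₂ g)) ∧
      (∀ a b : G,
        f (permMat n₁ (π₁ a) * permMat n₁ (π₁ b))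
          = f (permMat n₁ (π₁ a)) * f (permMat n₁ (π₁ b))) := by
  obtain ⟨φ, hφ⟩ := heff
  set v := fun g => permMat n₁ (π₁ g)
  set w := fun g => permMat n₂ (π₂ (φ g))
  have hrel : affineRelations ℝ v = affineRelations ℝ w := SetLike.coe_injective <| by
    rw [← affKer_permRep, hφ.affKer_eq]
    exact affKer_permRep (π₂.comp φ.toMonoidHom)
  obtain ⟨f, hf⟩ := exists_affineMap_apply_eq_of_affineRelations_le hrel.le
  obtain ⟨f', hf'⟩ := exists_affineMap_apply_eq_of_affineRelations_le hrel.ge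
  have hw : range w = range fun g => permMat n₂ (π₂ g) :=
    φ.surjective.range_comp fun g => permMat n₂ (π₂ g)
  have hvert : f '' range v = range fun g => permMat n₂ (π₂ g) := by
    rw [← range_comp, ← hw]
    exact congr_arg Set.range (funext hf)
  refine ⟨f, f', by rw [AffineMap.image_convexHull, hvert],
    leftInvOn_affineSpan_convexHull_range fun g => by rw [hf, hf'],
    hw ▸ leftInvOn_affineSpan_convexHull_range fun g => by rw [hf', hf], hvert, fun a b => ?_⟩
  have hv : v a * v b = v (a * b) := by simp only [v, map_mul, permMat_mul]
  change f (v a * v b) = f (v a) * f (v b)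
  rw [hv, hf, hf, hf]
  simp only [w, map_mul, permMat_mul]

/-- (a) ⇒ (d) of the characterization theorem. If `(G, π₁)` and
`(G, π₂)` are effectively equivalent, then there is an affine isomorphism
`Φ : aff(P(Π₁)) → aff(P(Π₂))` mapping `P(Π₁)` onto `P(Π₂)` whose restriction to
`Π₁(G)` is a group homomorphism onto `Π₂(G)`. -/
theorem effectivelyEquivalent_implies_affine_iso_multiplicative_on_vertices
    {n₁ n₂ : ℕ} (π₁ : G →* Equiv.Perm (Fin n₁)) (π₂ : G →* Equiv.Perm (Fin n₂))
    (hπ₁ : Function.Injective π₁) (hπ₂ : Function.Injective π₂)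
    (heff : ∃ φ : G ≃* G,
      StablyEquivalent (permRep n₁ π₁) ((permRep n₂ π₂).comp φ.toMonoidHom)) :
    ∃ (f : Matrix (Fin n₁) (Fin n₁) ℝ →ᵃ[ℝ] Matrix (Fin n₂) (Fin n₂) ℝ)
      (f' : Matrix (Fin n₂) (Fin n₂) ℝ →ᵃ[ℝ] Matrix (Fin n₁) (Fin n₁) ℝ),
      f '' (convexHull ℝ (Set.range fun g : G => permMat n₁ (π₁ g)))
        = convexHull ℝ (Set.range fun g : G => permMat n₂ (π₂ g)) ∧
      (∀ x ∈ affineSpan ℝ (convexHull ℝ (Set.range fun g : G => permMat n₁ (π₁ g))),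
        f' (f x) = x) ∧
      (∀ y ∈ affineSpan ℝ (convexHull ℝ (Set.range fun g : G => permMat n₂ (π₂ g))),
        f (f' y) = y) ∧
      (f '' (Set.range fun g : G => permMat n₁ (π₁ g))
        = Set.range fun g : G => permMat n₂ (π₂ g)) ∧
      (∀ a b : G,
        f (permMat n₁ (π₁ a) * permMat n₁ (π₁ b))
          = f (permMat n₁ (π₁ a)) * f (permMat n₁ (π₁ b))) :=
  effectivelyEquivalent_implies_affine_iso_multiplicative_on_vertices_general π₁ π₂ heff
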